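/- arXiv:1704.04145 — 2 statements merged into one kernel-verified Lean document; each statement's English description precedes it below -/
import Mathlib

section
/- Let G be a finite simple graph with no isolated vertices and let S be an S(G)-set. If S is both a packing and a dominating set of G, then γt(G) = 2γ(G). -/
open SimpleGraph

namespace TotalDom

variable {V : Type*}

/-- The closed neighborhood `N[v]` of a vertex. -/
def cnbr (G : SimpleGraph V) (v : V) : Set V := insert v (G.neighborSet v)

/-- `S` is a dominating set: every vertex outside `S` has a neighbor in `S`. -/
def IsDomSet (G : SimpleGraph V) (S : Set V) : Prop := ∀ v ∉ S, ∃ u ∈ S, G.Adj u v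

/-- `S` is a total dominating set: every vertex has a neighbor in `S`. -/
def IsTotalDomSet (G : SimpleGraph V) (S : Set V) : Prop := ∀ v : V, ∃ u ∈ S, G.Adj u v

/-- The domination number `γ(G)`. -/
noncomputable def domNum (G : SimpleGraph V) : ℕ :=
  sInf {n | ∃ S : Set V, IsDomSet G S ∧ S.ncard = n}

/-- The total domination number `γₜ(G)`. -/
noncomputable def totalDomNum (G : SimpleGraph V) : ℕ :=
  sInf {n | ∃ S : Set V, IsTotalDomSet G S ∧ S.ncard = n}

/-- A minimum dominating set (γ-set). -/
def IsMinDomSet (G : SimpleGraph V) (S : Set V) : Prop := IsDomSet G S ∧ S.ncard = domNum G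

/-- `S` is a packing: closed neighborhoods of distinct members are disjoint. -/
def IsPacking (G : SimpleGraph V) (S : Set V) : Prop :=
  S.Pairwise fun u v => Disjoint (cnbr G u) (cnbr G v)

/-- `M(v)`: neighbors of `v` having a neighbor outside `N[v]`. -/
def Mset (G : SimpleGraph V) (v : V) : Set V :=
  {u | G.Adj v u ∧ ∃ w, G.Adj u w ∧ w ∉ cnbr G v}

/-- `D(v)`: neighbors `u` of `v` that are not true twins of `v` with `N[u] ⊆ N[v]`. -/
def Dset (G : SimpleGraph V) (v : V) : Set V :=
  {u | G.Adj v u ∧ cnbr G u ≠ cnbr G v ∧ cnbr G u ⊆ cnbr G v}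

/-- `T(v)`: `v` together with its true twins. -/
def Tset (G : SimpleGraph V) (v : V) : Set V := {u | cnbr G u = cnbr G v}

/-- A non-isolated vertex `v` is special if no `u ∈ M(v)` satisfies `D(v) ⊆ N(u)`. -/
def Special (G : SimpleGraph V) (v : V) : Prop :=
  (G.neighborSet v).Nonempty ∧ ¬ ∃ u ∈ Mset G v, Dset G v ⊆ G.neighborSet u

/-- An `S(G)`-set: a set of special vertices containing exactly one vertex from each
true-twin equivalence class of special vertices. -/
def IsSGSet (G : SimpleGraph V) (S : Set V) : Prop :=
  (∀ u ∈ S, Special G u) ∧ ∀ v, Special G v → ∃! u, u ∈ S ∧ u ∈ Tset G v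

/-- `G` has no isolated vertices. -/
def NoIsolated (G : SimpleGraph V) : Prop := ∀ v : V, ∃ u, G.Adj v u

/-- `G` contains no induced copy of `H`. -/
def Free {α : Type*} (H : SimpleGraph α) (G : SimpleGraph V) : Prop := IsEmpty (H ↪g G)

/-- `H₁`: a 6-cycle plus one chord between vertices at distance two along the cycle. -/
def H1 : SimpleGraph (Fin 6) := cycleGraph 6 ⊔ fromEdgeSet {s(0, 2)}

/-- `H₂`: a 6-cycle `x₁x₂x₃x₄x₅x₆` plus the chords `x₂x₆` and `x₃x₅`. -/
def H2 : SimpleGraph (Fin 6) := cycleGraph 6 ⊔ fromEdgeSet {s(1, 5), s(2, 4)}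

/-- A leaf: a vertex of degree one. -/
def IsLeaf (G : SimpleGraph V) (v : V) : Prop := ∃! u, G.Adj v u

/-- A support vertex: a vertex adjacent to a leaf. -/
def IsSupport (G : SimpleGraph V) (v : V) : Prop := ∃ u, G.Adj v u ∧ IsLeaf G u

/-- `sup(G)`: the set of support vertices. -/
def supSet (G : SimpleGraph V) : Set V := {v | IsSupport G v}

/-!
Adding a neighbour of each vertex of a dominating set gives a total dominating set, so
`γₜ(G) ≤ 2γ(G)`. Conversely, a total dominating set `T` meeting the closed neighbourhood of a
vertex `v` in a single vertex `u` forces `u ∈ M(v)` (a neighbour of `u` in `T` lies outside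
`N[v]`) and `D(v) ⊆ N(u)` (the `T`-neighbour of `x ∈ D(v)` lies in `N[x] ⊆ N[v]`), so `T` meets
`N[v]` at least twice when `v` is special. Since `S` is a packing these neighbourhoods are
disjoint, whence `γₜ(G) ≥ 2|S| ≥ 2γ(G)`.
-/

theorem _root_.Set.mul_ncard_le_ncard_of_pairwiseDisjoint {ι α : Type*} [Finite α]
    {S : Set ι} {T : Set α} {A : ι → Set α} {k : ℕ} (hS : S.Finite) (hdisj : S.PairwiseDisjoint A)
    (hsub : ∀ i ∈ S, A i ⊆ T) (hk : ∀ i ∈ S, k ≤ (A i).ncard) :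
    k * S.ncard ≤ T.ncard := by
  classical
  have := Fintype.ofFinite α
  calc k * S.ncard = hS.toFinset.card • k := by
        rw [Set.ncard_eq_toFinset_card S hS, smul_eq_mul, mul_comm]
    _ ≤ ∑ i ∈ hS.toFinset, (A i).toFinset.card :=
        Finset.card_nsmul_le_sum _ _ _ fun i hi => by
          simpa only [Set.ncard_eq_toFinset_card'] using hk i (hS.mem_toFinset.mp hi)
    _ = (hS.toFinset.biUnion fun i => (A i).toFinset).card :=
        (Finset.card_biUnion fun i hi j hj hij => Set.disjoint_toFinset.mpr
          (hdisj (hS.mem_toFinset.mp hi) (hS.mem_toFinset.mp hj) hij)).symm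
    _ ≤ T.toFinset.card := Finset.card_le_card fun x hx => by
        obtain ⟨i, hi, hx⟩ := Finset.mem_biUnion.mp hx
        exact Set.mem_toFinset.mpr (hsub i (hS.mem_toFinset.mp hi) (Set.mem_toFinset.mp hx))
    _ = T.ncard := (Set.ncard_eq_toFinset_card' T).symm

variable {G : SimpleGraph V}

theorem domNum_le_ncard {S : Set V} (hS : IsDomSet G S) : domNum G ≤ S.ncard :=
  Nat.sInf_le ⟨S, hS, rfl⟩

theorem totalDomNum_le_ncard {T : Set V} (hT : IsTotalDomSet G T) : totalDomNum G ≤ T.ncard :=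
  Nat.sInf_le ⟨T, hT, rfl⟩

theorem exists_isDomSet_ncard_eq_domNum (G : SimpleGraph V) :
    ∃ D, IsDomSet G D ∧ D.ncard = domNum G :=
  Nat.sInf_mem (s := {n | ∃ D : Set V, IsDomSet G D ∧ D.ncard = n})
    ⟨_, Set.univ, fun v hv => absurd (Set.mem_univ v) hv, rfl⟩

theorem exists_isTotalDomSet_ncard_eq_totalDomNum (hG : NoIsolated G) :
    ∃ T, IsTotalDomSet G T ∧ T.ncard = totalDomNum G :=
  Nat.sInf_mem (s := {n | ∃ T : Set V, IsTotalDomSet G T ∧ T.ncard = n})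
    ⟨_, Set.univ, fun v => (hG v).imp fun u hu => ⟨Set.mem_univ u, hu.symm⟩, rfl⟩

theorem IsDomSet.isTotalDomSet_union_image {D : Set V} (hD : IsDomSet G D) {f : V → V}
    (hf : ∀ v, G.Adj v (f v)) : IsTotalDomSet G (D ∪ f '' D) := by
  intro v
  by_cases hv : v ∈ D
  · exact ⟨f v, Or.inr ⟨v, hv, rfl⟩, (hf v).symm⟩
  · obtain ⟨u, hu, huv⟩ := hD v hv
    exact ⟨u, Or.inl hu, huv⟩

theorem totalDomNum_le_two_mul_domNum [Finite V] (hG : NoIsolated G) :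
    totalDomNum G ≤ 2 * domNum G := by
  obtain ⟨D, hD, hDcard⟩ := exists_isDomSet_ncard_eq_domNum G
  choose f hf using hG
  calc totalDomNum G ≤ (D ∪ f '' D).ncard :=
        totalDomNum_le_ncard (hD.isTotalDomSet_union_image hf)
    _ ≤ D.ncard + (f '' D).ncard := Set.ncard_union_le _ _
    _ ≤ D.ncard + D.ncard := Nat.add_le_add_left (Set.ncard_image_le D.toFinite) _
    _ = 2 * domNum G := by rw [hDcard, two_mul]

theorem IsTotalDomSet.exists_mem_Mset_Dset_subset {T : Set V} (hT : IsTotalDomSet G T) {v : V}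
    (hv : (T ∩ cnbr G v).Subsingleton) : ∃ u ∈ Mset G v, Dset G v ⊆ G.neighborSet u := by
  obtain ⟨u, huT, huv⟩ := hT v
  have eq_u : ∀ x ∈ T, x ∈ cnbr G v → x = u := fun x hxT hxv =>
    hv ⟨hxT, hxv⟩ ⟨huT, Or.inr huv.symm⟩
  obtain ⟨w, hwT, hwu⟩ := hT u
  refine ⟨u, ⟨huv.symm, w, hwu.symm, fun hwv => hwu.ne (eq_u w hwT hwv)⟩, ?_⟩
  rintro x ⟨-, -, hxv⟩
  obtain ⟨t, htT, htx⟩ := hT x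
  rw [← eq_u t htT (hxv (Or.inr htx.symm))]
  exact htx

theorem Special.two_le_ncard_inter_cnbr [Finite V] {v : V} (hv : Special G v) {T : Set V}
    (hT : IsTotalDomSet G T) : 2 ≤ (T ∩ cnbr G v).ncard := by
  by_contra! hlt
  exact hv.2 (hT.exists_mem_Mset_Dset_subset
    (Set.ncard_le_one_iff_subsingleton.mp (Nat.le_of_lt_succ hlt)))

theorem IsPacking.mul_ncard_le_ncard [Finite V] {S : Set V} (hS : IsPacking G S) {T : Set V}
    {k : ℕ} (hk : ∀ v ∈ S, k ≤ (T ∩ cnbr G v).ncard) : k * S.ncard ≤ T.ncard :=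
  Set.mul_ncard_le_ncard_of_pairwiseDisjoint S.toFinite
    (fun _ hu _ hv huv => (hS hu hv huv).mono Set.inter_subset_right Set.inter_subset_right)
    (fun _ _ => Set.inter_subset_left) hk

/-- If an `S(G)`-set of a graph `G` with no isolated vertices is both a packing and a
dominating set, then `γₜ(G) = 2γ(G)`. -/
theorem stmt5 {V : Type*} [Fintype V] (G : SimpleGraph V) (hiso : NoIsolated G)
    (S : Set V) (hS : IsSGSet G S)
    (hpack : IsPacking G S) (hdom : IsDomSet G S) :
    totalDomNum G = 2 * domNum G := by
  obtain ⟨T, hT, hTcard⟩ := exists_isTotalDomSet_ncard_eq_totalDomNum hiso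
  have hlower : 2 * S.ncard ≤ totalDomNum G :=
    hTcard ▸ hpack.mul_ncard_le_ncard fun v hv => (hS.1 v hv).two_le_ncard_inter_cnbr hT
  have hupper := totalDomNum_le_two_mul_domNum (G := G) hiso
  have hdomNum_le := domNum_le_ncard hdom
  omega

end TotalDom
end

section
/- Let G be a finite simple graph with no isolated vertices that is (H1, H2, C6)-free, and let S be an S(G)-set. If γt(G) = 2γ(G), then S is both a packing and a dominating set of G. -/
/-!
Adding one neighbour of each vertex of a γ-set gives γₜ ≤ 2γ, so equality leaves no room for
savings. First, a γ-set `D` must be a packing: a vertex `x` common to `N[u]` and `N[v]` would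
serve `u` and `v` at once. Second, every vertex `d ∈ D` is special: otherwise take
`u ∈ M(d)` with `D(d) ⊆ N(u)`. For each other `e ∈ D`, the sets `N(y) ∩ N[e]` with
`y ∈ N(d)` form a chain, as two incomparable ones span an induced `C₆`, `H₁` or `H₂`; so a
single neighbour of `e` serves all of `N(d)`, and with `u` this yields a total dominating set
of size `2γ - 1`. Hence an `S(G)`-set dominates. For the packing property, any γ-set contains
a vertex `e` with `N[e] ⊆ N[v]` for a special `v`, and `e` can be swapped for `v`; doing this
for two vertices of an `S(G)`-set puts both into one γ-set, which is a packing.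
-/


open SimpleGraph

namespace TotalDom

variable {V : Type*}

variable {G : SimpleGraph V} {D S : Set V} {d e u v w : V}

lemma mem_cnbr : w ∈ cnbr G v ↔ w = v ∨ G.Adj v w := Iff.rfl

lemma self_mem_cnbr (G : SimpleGraph V) (v : V) : v ∈ cnbr G v := Or.inl rfl

lemma mem_cnbr_of_adj (h : G.Adj v w) : w ∈ cnbr G v := Or.inr h

lemma adj_of_mem_cnbr (h : w ∈ cnbr G v) (hne : w ≠ v) : G.Adj v w := h.resolve_left hne

lemma mem_cnbr_comm : w ∈ cnbr G v ↔ v ∈ cnbr G w := by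
  simp only [mem_cnbr, eq_comm, G.adj_comm]

lemma not_adj_of_disjoint_cnbr (hde : Disjoint (cnbr G d) (cnbr G e)) (hw : w ∈ cnbr G e) :
    ¬ G.Adj d w := fun h => Set.disjoint_left.mp hde (mem_cnbr_of_adj h) hw

lemma IsDomSet.exists_mem_cnbr (hD : IsDomSet G D) (w : V) : ∃ e ∈ D, w ∈ cnbr G e := by
  by_cases hw : w ∈ D
  · exact ⟨w, hw, self_mem_cnbr G w⟩
  · obtain ⟨e, he, hew⟩ := hD w hw
    exact ⟨e, he, mem_cnbr_of_adj hew⟩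

lemma IsDomSet.insert_sdiff (hD : IsDomSet G D) (hev : cnbr G e ⊆ cnbr G v) :
    IsDomSet G (insert v (D \ {e})) := by
  intro w hw
  obtain ⟨t, ht, hwt⟩ := hD.exists_mem_cnbr w
  by_cases hte : t = e
  · subst hte
    refine ⟨v, Set.mem_insert v _, adj_of_mem_cnbr (hev hwt) ?_⟩
    rintro rfl
    exact hw (Set.mem_insert w _)
  · have htD : t ∈ insert v (D \ {e}) := Set.mem_insert_of_mem v ⟨ht, hte⟩
    refine ⟨t, htD, adj_of_mem_cnbr hwt ?_⟩
    rintro rfl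
    exact hw htD

lemma domNum_le_ncard_s6 (hD : IsDomSet G D) : domNum G ≤ D.ncard := Nat.sInf_le ⟨D, hD, rfl⟩

lemma exists_isMinDomSet (G : SimpleGraph V) : ∃ D, IsMinDomSet G D :=
  Nat.sInf_mem (s := {n | ∃ S : Set V, IsDomSet G S ∧ S.ncard = n})
    ⟨_, Set.univ, fun v hv => (hv (Set.mem_univ v)).elim, rfl⟩

lemma IsMinDomSet.of_ncard_le (hD : IsDomSet G D) (hcard : D.ncard ≤ domNum G) :
    IsMinDomSet G D :=
  ⟨hD, le_antisymm hcard (domNum_le_ncard_s6 hD)⟩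

lemma IsMinDomSet.insert_sdiff [Finite V] (hD : IsMinDomSet G D) (he : e ∈ D)
    (hev : cnbr G e ⊆ cnbr G v) : IsMinDomSet G (insert v (D \ {e})) := by
  refine .of_ncard_le (hD.1.insert_sdiff hev) ?_
  have := Set.ncard_insert_le v (D \ {e})
  have := Set.ncard_sdiff_singleton_add_one he (Set.toFinite D)
  have := hD.2
  omega

lemma two_mul_domNum_le_ncard (h : totalDomNum G = 2 * domNum G) {T : Set V}
    (hT : IsTotalDomSet G T) : 2 * domNum G ≤ T.ncard :=
  h ▸ Nat.sInf_le ⟨T, hT, rfl⟩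

lemma ncard_union_image_union_singleton_le [Finite V] (A B : Set V) (f : V → V) (x : V) :
    (A ∪ f '' B ∪ {x}).ncard ≤ A.ncard + B.ncard + 1 :=
  calc (A ∪ f '' B ∪ {x}).ncard ≤ (A ∪ f '' B).ncard + ({x} : Set V).ncard :=
        Set.ncard_union_le _ _
    _ ≤ A.ncard + (f '' B).ncard + 1 := by
        rw [Set.ncard_singleton]; gcongr; exact Set.ncard_union_le _ _
    _ ≤ A.ncard + B.ncard + 1 := by
        have := Set.ncard_image_le (f := f) (Set.toFinite B)
        omega

lemma adj_or_adj_of_mem_cnbr_inter {x : V} (hu : x ∈ cnbr G u) (hv : x ∈ cnbr G v)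
    (huv : u ≠ v) : G.Adj u x ∨ G.Adj u v := by
  rcases hu with rfl | hux
  · exact Or.inr (adj_of_mem_cnbr hv huv).symm
  · exact Or.inl hux

theorem IsMinDomSet.isPacking [Finite V] (hiso : NoIsolated G)
    (h : totalDomNum G = 2 * domNum G) (hD : IsMinDomSet G D) : IsPacking G D := by
  intro u hu v hv huv
  by_contra hnd
  obtain ⟨x, hxu, hxv⟩ := Set.not_disjoint_iff.mp hnd
  choose f hf using hiso
  have huvD : {u, v} ⊆ D := Set.insert_subset hu (Set.singleton_subset_iff.mpr hv)
  have hT : IsTotalDomSet G (D ∪ f '' (D \ {u, v}) ∪ {x}) := by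
    intro w
    by_cases hwD : w ∈ D
    · by_cases hw : w ∈ ({u, v} : Set V)
      · rcases hw with rfl | rfl
        · rcases adj_or_adj_of_mem_cnbr_inter hxu hxv huv with hwx | hwv
          · exact ⟨x, Or.inr rfl, hwx.symm⟩
          · exact ⟨v, Or.inl (Or.inl hv), hwv.symm⟩
        · rcases adj_or_adj_of_mem_cnbr_inter hxv hxu huv.symm with hwx | hwu
          · exact ⟨x, Or.inr rfl, hwx.symm⟩
          · exact ⟨u, Or.inl (Or.inl hu), hwu.symm⟩
      · exact ⟨f w, Or.inl (Or.inr ⟨w, ⟨hwD, hw⟩, rfl⟩), (hf w).symm⟩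
    · obtain ⟨t, ht, htw⟩ := hD.1 w hwD
      exact ⟨t, Or.inl (Or.inl ht), htw⟩
  have hle := two_mul_domNum_le_ncard h hT
  have hcard := ncard_union_image_union_singleton_le D (D \ {u, v}) f x
  have hdiff := Set.ncard_sdiff huvD (Set.toFinite _)
  have hpair : ({u, v} : Set V).ncard ≤ D.ncard := Set.ncard_le_ncard huvD
  rw [Set.ncard_pair huv] at hdiff hpair
  rw [← hD.2] at hle
  omega

lemma Special.not_cnbr_ssubset (hu : Special G u) : ¬ cnbr G u ⊂ cnbr G v := by
  intro huv
  have hvu : v ∈ cnbr G u := mem_cnbr_comm.mp (huv.subset (self_mem_cnbr G u))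
  obtain ⟨x, hxv, hxu⟩ := Set.exists_of_ssubset huv
  have hne : v ≠ u := fun h => hxu (h ▸ hxv)
  refine hu.2 ⟨v, ⟨adj_of_mem_cnbr hvu hne, x, adj_of_mem_cnbr hxv ?_, hxu⟩, ?_⟩
  · rintro rfl
    exact hxu hvu
  · rintro y ⟨-, hyu, hysub⟩
    refine adj_of_mem_cnbr (huv.subset (hysub (self_mem_cnbr G y))) ?_
    rintro rfl
    exact hyu (hysub.antisymm huv.subset)

theorem Special.exists_mem_cnbr_subset (hv : Special G v) (hD : IsDomSet G D)
    (hP : IsPacking G D) : ∃ e ∈ D, cnbr G e ⊆ cnbr G v := by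
  obtain ⟨e, he, hve⟩ := hD.exists_mem_cnbr v
  by_contra! hnone
  obtain ⟨x, hxe, hxv⟩ := Set.not_subset.mp (hnone e he)
  have hev : e ≠ v := by
    rintro rfl
    exact hxv hxe
  have hxne : x ≠ e := fun h => hxv (h ▸ mem_cnbr_comm.mp hve)
  have heM : e ∈ Mset G v :=
    ⟨(adj_of_mem_cnbr hve hev.symm).symm, x, adj_of_mem_cnbr hxe hxne, hxv⟩
  obtain ⟨y, ⟨-, -, hyv⟩, hye⟩ := Set.not_subset.mp fun hsub => hv.2 ⟨e, heM, hsub⟩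
  obtain ⟨e', he', hye'⟩ := hD.exists_mem_cnbr y
  have hee' : e ≠ e' := by
    rintro rfl
    rcases hye' with rfl | hey
    · exact hnone _ he hyv
    · exact hye hey
  have hve' : v ∈ cnbr G e' := mem_cnbr_comm.mp (hyv (mem_cnbr_comm.mp hye'))
  exact Set.disjoint_left.mp (hP he he' hee') hve hve'

lemma IsSGSet.eq_of_cnbr_eq (hS : IsSGSet G S) (hu : u ∈ S) (hv : v ∈ S)
    (huv : cnbr G u = cnbr G v) : u = v := by
  obtain ⟨t, -, ht⟩ := hS.2 u (hS.1 u hu)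
  exact (ht u ⟨hu, rfl⟩).trans (ht v ⟨hv, huv.symm⟩).symm

theorem IsSGSet.isPacking [Finite V] (hiso : NoIsolated G) (h : totalDomNum G = 2 * domNum G)
    (hS : IsSGSet G S) : IsPacking G S := by
  intro u hu v hv huv
  obtain ⟨D, hD⟩ := exists_isMinDomSet G
  obtain ⟨e, he, heu⟩ := (hS.1 u hu).exists_mem_cnbr_subset hD.1 (hD.isPacking hiso h)
  have hD₁ := hD.insert_sdiff he heu
  obtain ⟨e', he', he'v⟩ := (hS.1 v hv).exists_mem_cnbr_subset hD₁.1 (hD₁.isPacking hiso h)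
  have he'u : e' ≠ u := by
    rintro rfl
    exact (hS.1 e' hu).not_cnbr_ssubset
      (he'v.ssubset_of_ne fun h => huv (hS.eq_of_cnbr_eq hu hv h))
  have hD₂ := hD₁.insert_sdiff he' he'v
  exact hD₂.isPacking hiso h (Set.mem_insert_of_mem v ⟨Set.mem_insert u _, he'u.symm⟩)
    (Set.mem_insert v _) huv

lemma IsSGSet.isDomSet (hS : IsSGSet G S) (hD : IsDomSet G D) (hDS : ∀ d ∈ D, Special G d) :
    IsDomSet G S := by
  intro w hw
  obtain ⟨e, he, hwe⟩ := hD.exists_mem_cnbr w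
  obtain ⟨t, ⟨ht, hte⟩, -⟩ := hS.2 e (hDS e he)
  have hwt : w ∈ cnbr G t := (show cnbr G t = cnbr G e from hte) ▸ hwe
  exact ⟨t, ht, adj_of_mem_cnbr hwt fun h => hw (h ▸ ht)⟩

lemma Free.false_of_adj_iff {α : Type*} {H : SimpleGraph α} (hF : Free H G)
    (hH : ∀ i j, (∀ k, H.Adj i k ↔ H.Adj j k) → i = j) (f : α → V)
    (hf : ∀ i j, G.Adj (f i) (f j) ↔ H.Adj i j) : False :=
  hF.false ⟨⟨f, fun i j hij => hH i j fun k => by rw [← hf, ← hf, hij]⟩, hf _ _⟩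

lemma false_of_induced_hexagon (hH1 : Free H1 G) (hH2 : Free H2 G) (hC6 : Free (cycleGraph 6) G)
    {v₀ v₁ v₂ v₃ v₄ v₅ : V}
    (h01 : G.Adj v₀ v₁) (h12 : G.Adj v₁ v₂) (h23 : G.Adj v₂ v₃)
    (h34 : G.Adj v₃ v₄) (h45 : G.Adj v₄ v₅) (h05 : G.Adj v₀ v₅)
    (h02 : ¬ G.Adj v₀ v₂) (h03 : ¬ G.Adj v₀ v₃) (h04 : ¬ G.Adj v₀ v₄)
    (h13 : ¬ G.Adj v₁ v₃) (h14 : ¬ G.Adj v₁ v₄) (h25 : ¬ G.Adj v₂ v₅)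
    (h35 : ¬ G.Adj v₃ v₅) : False := by
  by_cases h15 : G.Adj v₁ v₅ <;> by_cases h24 : G.Adj v₂ v₄
  · refine hH2.false_of_adj_iff (by unfold H2; decide) ![v₀, v₁, v₂, v₃, v₄, v₅] ?_
    intro i j; fin_cases i <;> fin_cases j <;> simp +decide [H2, G.adj_comm, *]
  · refine hH1.false_of_adj_iff (by unfold H1; decide) ![v₁, v₀, v₅, v₄, v₃, v₂] ?_
    intro i j; fin_cases i <;> fin_cases j <;> simp +decide [H1, G.adj_comm, *]
  · refine hH1.false_of_adj_iff (by unfold H1; decide) ![v₂, v₃, v₄, v₅, v₀, v₁] ?_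
    intro i j; fin_cases i <;> fin_cases j <;> simp +decide [H1, G.adj_comm, *]
  · refine hC6.false_of_adj_iff (by decide) ![v₀, v₁, v₂, v₃, v₄, v₅] ?_
    intro i j; fin_cases i <;> fin_cases j <;> simp +decide [G.adj_comm, *]

lemma neighborSet_inter_cnbr_total (hH1 : Free H1 G) (hH2 : Free H2 G)
    (hC6 : Free (cycleGraph 6) G) (hde : Disjoint (cnbr G d) (cnbr G e)) {y₁ y₂ : V}
    (hy₁ : G.Adj d y₁) (hy₂ : G.Adj d y₂) :
    G.neighborSet y₁ ∩ cnbr G e ⊆ G.neighborSet y₂ ∩ cnbr G e ∨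
      G.neighborSet y₂ ∩ cnbr G e ⊆ G.neighborSet y₁ ∩ cnbr G e := by
  by_contra! hinc
  obtain ⟨z₁, ⟨hy₁z₁, hz₁⟩, hz₁'⟩ := Set.not_subset.mp hinc.1
  obtain ⟨z₂, ⟨hy₂z₂, hz₂⟩, hz₂'⟩ := Set.not_subset.mp hinc.2
  have hed : Disjoint (cnbr G e) (cnbr G d) := hde.symm
  have hy₁e : ¬ G.Adj y₁ e :=
    fun h => not_adj_of_disjoint_cnbr hed (mem_cnbr_of_adj hy₁) h.symm
  have hy₂e : ¬ G.Adj e y₂ := not_adj_of_disjoint_cnbr hed (mem_cnbr_of_adj hy₂)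
  have hz₁e : G.Adj z₁ e := (adj_of_mem_cnbr hz₁ fun h => hy₁e (h ▸ hy₁z₁)).symm
  have hez₂ : G.Adj e z₂ := adj_of_mem_cnbr hz₂ fun h => hy₂e (h ▸ hy₂z₂.symm)
  exact false_of_induced_hexagon hH1 hH2 hC6 hy₁ hy₁z₁ hz₁e hez₂ hy₂z₂.symm hy₂
    (not_adj_of_disjoint_cnbr hde hz₁) (not_adj_of_disjoint_cnbr hde (self_mem_cnbr G e))
    (not_adj_of_disjoint_cnbr hde hz₂) hy₁e (fun h => hz₂' ⟨h, hz₂⟩)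
    (fun h => hz₁' ⟨h.symm, hz₁⟩) hy₂e

lemma exists_common_neighbor_of_disjoint_cnbr [Finite V] (hH1 : Free H1 G) (hH2 : Free H2 G)
    (hC6 : Free (cycleGraph 6) G) (hde : Disjoint (cnbr G d) (cnbr G e)) (he : ∃ z, G.Adj e z) :
    ∃ z, G.Adj e z ∧
      ∀ y, G.Adj d y → (G.neighborSet y ∩ cnbr G e).Nonempty → G.Adj y z := by
  set Y := {y | G.Adj d y ∧ (G.neighborSet y ∩ cnbr G e).Nonempty}
  rcases Y.eq_empty_or_nonempty with hY | hY
  · obtain ⟨z, hez⟩ := he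
    exact ⟨z, hez, fun y hdy hy => (hY.subset ⟨hdy, hy⟩).elim⟩
  -- a `y₀ ∈ Y` with minimal `N(y₀) ∩ N[e]` works, the sets forming a chain
  obtain ⟨y₀, ⟨hdy₀, z, hy₀z, hz⟩, hmin⟩ :=
    (Set.toFinite Y).exists_minimalFor (fun y => G.neighborSet y ∩ cnbr G e) Y hY
  have hze : z ≠ e := by
    rintro rfl
    exact not_adj_of_disjoint_cnbr hde.symm (mem_cnbr_of_adj hdy₀) hy₀z.symm
  refine ⟨z, adj_of_mem_cnbr hz hze, fun y hdy hy => ?_⟩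
  rcases neighborSet_inter_cnbr_total hH1 hH2 hC6 hde hdy₀ hdy with hsub | hsub
  · exact (hsub ⟨hy₀z, hz⟩).1
  · exact (hmin ⟨hdy, hy⟩ hsub ⟨hy₀z, hz⟩).1

lemma isTotalDomSet_of_mem_Mset (hD : IsDomSet G D) (hu : u ∈ Mset G d)
    (huD : Dset G d ⊆ G.neighborSet u) {F : V → V}
    (hF : ∀ e ∈ D \ {d}, G.Adj e (F e) ∧
      ∀ y, G.Adj d y → (G.neighborSet y ∩ cnbr G e).Nonempty → G.Adj y (F e)) :
    IsTotalDomSet G (D \ {d} ∪ F '' (D \ {d}) ∪ {u}) := by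
  obtain ⟨hdu, w, huw, hwd⟩ := hu
  have hF_mem : ∀ e ∈ D \ {d}, F e ∈ D \ {d} ∪ F '' (D \ {d}) ∪ {u} :=
    fun e he => Or.inl (Or.inr ⟨e, he, rfl⟩)
  intro x
  by_cases hxd : x ∈ cnbr G d
  · rcases hxd with rfl | hdx
    · exact ⟨u, Or.inr rfl, hdu.symm⟩
    by_cases hout : ∃ p, G.Adj x p ∧ p ∉ cnbr G d
    · obtain ⟨p, hxp, hpd⟩ := hout
      obtain ⟨e, he, hpe⟩ := hD.exists_mem_cnbr p
      have hed : e ≠ d := by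
        rintro rfl
        exact hpd hpe
      exact ⟨F e, hF_mem e ⟨he, hed⟩, ((hF e ⟨he, hed⟩).2 x hdx ⟨p, hxp, hpe⟩).symm⟩
    push Not at hout
    have hxsub : cnbr G x ⊆ cnbr G d := by
      rintro p (rfl | hxp)
      exacts [mem_cnbr_of_adj hdx, hout p hxp]
    refine ⟨u, Or.inr rfl, ?_⟩
    by_cases htwin : cnbr G x = cnbr G d
    · refine (adj_of_mem_cnbr (htwin ▸ mem_cnbr_of_adj hdu) ?_).symm
      rintro rfl
      exact hwd (htwin ▸ mem_cnbr_of_adj huw)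
    · exact huD ⟨hdx, htwin, hxsub⟩
  · obtain ⟨e, he, hxe⟩ := hD.exists_mem_cnbr x
    have hed : e ≠ d := by
      rintro rfl
      exact hxd hxe
    rcases hxe with rfl | hex
    · exact ⟨F x, hF_mem x ⟨he, hed⟩, ((hF x ⟨he, hed⟩).1).symm⟩
    · exact ⟨e, Or.inl (Or.inl ⟨he, hed⟩), hex⟩

theorem IsMinDomSet.special [Finite V] (hiso : NoIsolated G) (hH1 : Free H1 G)
    (hH2 : Free H2 G) (hC6 : Free (cycleGraph 6) G) (h : totalDomNum G = 2 * domNum G)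
    (hD : IsMinDomSet G D) (hd : d ∈ D) : Special G d := by
  refine ⟨hiso d, fun ⟨u, hu, huD⟩ => ?_⟩
  have hP := hD.isPacking hiso h
  choose! F hF using fun e (he : e ∈ D \ {d}) => exists_common_neighbor_of_disjoint_cnbr
    hH1 hH2 hC6 (hP hd he.1 fun hde => he.2 hde.symm) (hiso e)
  have hle := two_mul_domNum_le_ncard h (isTotalDomSet_of_mem_Mset hD.1 hu huD hF)
  have hcard := ncard_union_image_union_singleton_le (D \ {d}) (D \ {d}) F u
  have hdiff := Set.ncard_sdiff_singleton_add_one hd (Set.toFinite D)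
  rw [← hD.2] at hle
  omega

/-- For an `(H₁,H₂,C₆)`-free graph `G` with no isolated vertices satisfying `γₜ(G) = 2γ(G)`,
every `S(G)`-set is both a packing and a dominating set of `G`. -/
theorem stmt6 {V : Type*} [Fintype V] (G : SimpleGraph V) (hiso : NoIsolated G)
    (hH1 : Free H1 G) (hH2 : Free H2 G) (hC6 : Free (cycleGraph 6) G)
    (S : Set V) (hS : IsSGSet G S)
    (h : totalDomNum G = 2 * domNum G) :
    IsPacking G S ∧ IsDomSet G S := by
  obtain ⟨D, hD⟩ := exists_isMinDomSet G
  exact ⟨hS.isPacking hiso h, hS.isDomSet hD.1 fun d hd => hD.special hiso hH1 hH2 hC6 h hd⟩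

end TotalDom
end
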